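/- Let X be a random variable on Z/4Z with P_X(0) = P_X(2) = 1/2. For any n ≥ 1 and N = 2^n, let X^N be N i.i.d. copies of X and U^N = X^N G_N, where G_N = [[1,0],[1,1]]^{⊗n} B_N with arithmetic in the ring Z/4Z (equivalently in GF(4)). Then U^N has the same distribution as X^N; in particular, the entropies H(U_i | U^{i−1}) = 1 bit for all i and no polarization occurs. -/

import Mathlib

open Matrix

/-- The kernel `[[1,0],[1,1]]` with entries in `ℤ/4ℤ`. -/
def F2kernel4 : Matrix (Fin 2) (Fin 2) (ZMod 4) := !![1, 0; 1, 1]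

/-- `n`-th Kronecker power of the kernel, indexed by bit strings. -/
def kronPow4 (n : ℕ) : Matrix (Fin n → Fin 2) (Fin n → Fin 2) (ZMod 4) :=
  Matrix.of fun i j => ∏ k : Fin n, F2kernel4 (i k) (j k)

/-- Bit-reversal permutation matrix `B_N`. -/
def bitRev4 (n : ℕ) : Matrix (Fin n → Fin 2) (Fin n → Fin 2) (ZMod 4) :=
  Matrix.of fun i j => if i = j ∘ Fin.rev then 1 else 0

/-- The polar transform `G_N = F₂^{⊗n} B_N` with arithmetic in `ℤ/4ℤ`. -/
def polarG4 (n : ℕ) : Matrix (Fin n → Fin 2) (Fin n → Fin 2) (ZMod 4) :=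
  kronPow4 n * bitRev4 n

/-- The MSB-first numbering of indices by bit strings. -/
def ord {n : ℕ} (i : Fin n → Fin 2) : ℕ :=
  ∑ k : Fin n, (i k).val * 2 ^ (n - 1 - k.val)

/-- The pmf of the source `X` on `ℤ/4ℤ` with `P_X(0) = P_X(2) = 1/2`. -/
noncomputable def pX : ZMod 4 → ℝ := fun x => if x = 0 ∨ x = 2 then 1 / 2 else 0

/-- Joint pmf of `N` i.i.d. copies of `X`. -/
noncomputable def pXN {n : ℕ} (x : (Fin n → Fin 2) → ZMod 4) : ℝ :=
  ∏ i : Fin n → Fin 2, pX (x i)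

/-- Conditional Shannon entropy (base 2) of a joint pmf `q x y`. -/
noncomputable def condEnt {α β : Type*} [Fintype α] (q : α → β → ℝ) : ℝ :=
  ∑' y : β, ∑ x : α, -(q x y * Real.logb 2 (q x y / ∑ x' : α, q x' y))

/-! The polar transform is invertible over `ℤ/4ℤ`: the kernel has determinant `1` and `B_N` is
an involution. An invertible linear map preserves the `2`-torsion subgroup `{0,2}^N`, on which
`X^N` is uniform, so `U^N` is again uniform on `{0,2}^N`. Hence the `U_i` are i.i.d. with law
`P_X`, and `H(U_i | U^{i-1}) = H(X) = 1`. -/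

namespace Matrix

variable {κ ι R : Type*} [Fintype κ] [CommRing R]

def piKronecker (A : Matrix ι ι R) : Matrix (κ → ι) (κ → ι) R :=
  of fun i j => ∏ k, A (i k) (j k)

theorem piKronecker_mul [DecidableEq κ] [Fintype ι] (A B : Matrix ι ι R) :
    (piKronecker (A * B) : Matrix (κ → ι) (κ → ι) R) = piKronecker A * piKronecker B := by
  ext i j
  simp only [piKronecker, mul_apply, of_apply, ← Finset.prod_mul_distrib]
  exact Fintype.prod_sum fun k l => A (i k) l * B l (j k)

theorem piKronecker_one [DecidableEq ι] :
    (piKronecker (1 : Matrix ι ι R) : Matrix (κ → ι) (κ → ι) R) = 1 := by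
  ext i j
  simp only [piKronecker, of_apply, one_apply, Fintype.prod_boole, funext_iff]

theorem isUnit_piKronecker [DecidableEq κ] [Fintype ι] [DecidableEq ι] {A : Matrix ι ι R}
    (hA : IsUnit A) :
    IsUnit (piKronecker A : Matrix (κ → ι) (κ → ι) R) := by
  obtain ⟨u, rfl⟩ := hA
  exact ⟨⟨piKronecker u, piKronecker u⁻¹.1,
    by rw [← piKronecker_mul, u.mul_inv, piKronecker_one],
    by rw [← piKronecker_mul, u.inv_mul, piKronecker_one]⟩, rfl⟩

end Matrix

theorem isUnit_kronPow4 (n : ℕ) : IsUnit (kronPow4 n) := by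
  refine isUnit_piKronecker ((isUnit_iff_isUnit_det _).2 ?_)
  simp [F2kernel4, det_fin_two_of]

theorem bitRev4_mul_self (n : ℕ) : bitRev4 n * bitRev4 n = 1 := by
  ext i j
  simp [bitRev4, mul_apply, one_apply, Function.comp_assoc, Fin.rev_involutive.comp_self]

theorem isUnit_polarG4 (n : ℕ) : IsUnit (polarG4 n) :=
  (isUnit_kronPow4 n).mul ⟨⟨_, _, bitRev4_mul_self n, bitRev4_mul_self n⟩, rfl⟩

theorem pX_eq_ite (a : ZMod 4) : pX a = if 2 • a = 0 then 1 / 2 else 0 :=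
  if_congr (by revert a; decide) rfl rfl

theorem pXN_eq_ite {n : ℕ} (x : (Fin n → Fin 2) → ZMod 4) :
    pXN x = if 2 • x = 0 then (1 / 2) ^ Fintype.card (Fin n → Fin 2) else 0 := by
  simp only [pXN, pX_eq_ite, Fintype.prod_ite_zero, Finset.prod_const, Finset.card_univ,
    funext_iff, Pi.smul_apply, Pi.zero_apply]

theorem pX_values : pX 0 = 1 / 2 ∧ pX 1 = 0 ∧ pX 2 = 1 / 2 ∧ pX 3 = 0 := by
  refine ⟨if_pos ?_, if_neg ?_, if_pos ?_, if_neg ?_⟩ <;> decide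

theorem sum_pX : ∑ a, pX a = 1 := by
  rw [show ∑ a, pX a = pX 0 + pX 1 + pX 2 + pX 3 from Fin.sum_univ_four pX]
  obtain ⟨h0, h1, h2, h3⟩ := pX_values
  norm_num [h0, h1, h2, h3]

theorem entropy_pX : ∑ a, -(pX a * Real.logb 2 (pX a)) = 1 := by
  let f a := -(pX a * Real.logb 2 (pX a))
  rw [show ∑ a, f a = f 0 + f 1 + f 2 + f 3 from Fin.sum_univ_four f]
  obtain ⟨h0, h1, h2, h3⟩ := pX_values
  norm_num [f, h0, h1, h2, h3]
  rw [one_div, Real.logb_inv, Real.logb_self_eq_one one_lt_two]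
  ring

theorem pXN_vecMul {n : ℕ} {M : Matrix (Fin n → Fin 2) (Fin n → Fin 2) (ZMod 4)} (hM : IsUnit M)
    (x : (Fin n → Fin 2) → ZMod 4) : pXN (x ᵥ* M) = pXN x := by
  simp only [pXN_eq_ite, ← smul_vecMul,
    (vecMul_injective_of_isUnit hM).eq_iff' (zero_vecMul M)]

theorem sum_ite_vecMul_pXN {n : ℕ} {M : Matrix (Fin n → Fin 2) (Fin n → Fin 2) (ZMod 4)}
    (hM : IsUnit M) (p : ((Fin n → Fin 2) → ZMod 4) → Prop) [DecidablePred p] :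
    ∑ x, (if p (x ᵥ* M) then pXN x else 0) = ∑ y, if p y then pXN y else 0 :=
  Fintype.sum_bijective _ (Finite.injective_iff_bijective.1 (vecMul_injective_of_isUnit hM)) _ _
    fun x => by rw [pXN_vecMul hM]

theorem sum_ite_apply_eq_and_forall_eq_prod {κ α : Type*} [Fintype κ] [DecidableEq κ] [Fintype α]
    [DecidableEq α] (p : α → ℝ) (hp : ∑ b, p b = 1) {P : κ → Prop} [DecidablePred P] {i : κ}
    (hi : ¬P i) (a : α) (v : Subtype P → α) :
    ∑ y : κ → α, (if y i = a ∧ ∀ j : Subtype P, y j = v j then ∏ k, p (y k) else 0) =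
      p a * ∏ j, p (v j) := by
  -- the indicator of the event factors over the coordinates, `g k` being the `k`-th factor
  let g k b := if (k = i → b = a) ∧ ∀ h : P k, b = v ⟨k, h⟩ then p b else 0
  have hsummand (y : κ → α) :
      (if y i = a ∧ ∀ j : Subtype P, y j = v j then ∏ k, p (y k) else 0) = ∏ k, g k (y k) := by
    simp only [g, Fintype.prod_ite_zero, forall_and, forall_eq, Subtype.forall]
  have hfactor k : ∑ b, g k b = if k = i then p a else if h : P k then p (v ⟨k, h⟩) else 1 := by
    by_cases hk : k = i
    · subst hk; simp [g, hi]
    by_cases hPk : P k <;> simp [g, hk, hPk, hp]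
  simp only [hsummand, ← Fintype.prod_sum, hfactor]
  rw [← Fintype.prod_subtype_mul_prod_subtype P, mul_comm]
  congr 1
  · rw [Fintype.prod_eq_single ⟨i, hi⟩ fun k hk => by simp [Subtype.ext_iff.not.1 hk, k.2]]
    simp
  · refine Finset.prod_congr rfl fun j _ => ?_
    simp [j.2, show (j : κ) ≠ i from fun h => hi (h ▸ j.2)]

theorem condEnt_mul {α β : Type*} [Fintype α] [Fintype β] (p : α → ℝ) (r : β → ℝ)
    (hp : ∑ a, p a = 1) :
    condEnt (fun a b => p a * r b) = (∑ b, r b) * ∑ a, -(p a * Real.logb 2 (p a)) := by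
  rw [condEnt, tsum_fintype, Finset.sum_mul]
  refine Finset.sum_congr rfl fun b _ => ?_
  rw [← Finset.sum_mul, hp, one_mul, Finset.mul_sum]
  by_cases hb : r b = 0
  · simp [hb]
  refine Finset.sum_congr rfl fun a _ => ?_
  rw [mul_div_cancel_right₀ _ hb]
  ring

theorem stmt16_general (n : ℕ) :
    (∀ u : (Fin n → Fin 2) → ZMod 4,
      (∑ x : (Fin n → Fin 2) → ZMod 4,
        if Matrix.vecMul x (polarG4 n) = u then pXN x else 0) = pXN u) ∧
    (∀ i : Fin n → Fin 2,
      condEnt (fun (a : ZMod 4) (v : {j : Fin n → Fin 2 // ord j < ord i} → ZMod 4) =>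
        ∑ x : (Fin n → Fin 2) → ZMod 4,
          if Matrix.vecMul x (polarG4 n) i = a ∧
              (∀ j : {j : Fin n → Fin 2 // ord j < ord i},
                Matrix.vecMul x (polarG4 n) j.1 = v j)
          then pXN x else 0) = 1) := by
  refine ⟨fun u => ?_, fun i => ?_⟩
  · rw [sum_ite_vecMul_pXN (isUnit_polarG4 n) (· = u), Finset.sum_ite_eq' Finset.univ,
      if_pos (Finset.mem_univ u)]
  · calc condEnt _
        = condEnt fun a (v : {j // ord j < ord i} → ZMod 4) => pX a * ∏ j, pX (v j) := by
          congr 1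
          ext a v
          rw [sum_ite_vecMul_pXN (isUnit_polarG4 n) fun y => y i = a ∧ ∀ j, y j.1 = v j]
          exact sum_ite_apply_eq_and_forall_eq_prod pX sum_pX (P := (ord · < ord i))
            (lt_irrefl _) a v
      _ = 1 := by
          rw [condEnt_mul pX _ sum_pX, ← Fintype.prod_sum, sum_pX, entropy_pX]
          simp

/-- Counterexample over the non-prime alphabet `ℤ/4ℤ`: for `X` uniform on
`{0,2}` and `U^N = X^N G_N`, the vector `U^N` has the same distribution as
`X^N`; in particular `H(U_i | U^{i-1}) = 1` bit for every `i`, so no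
polarization occurs. -/
theorem stmt16 (n : ℕ) (hn : 1 ≤ n) :
    (∀ u : (Fin n → Fin 2) → ZMod 4,
      (∑ x : (Fin n → Fin 2) → ZMod 4,
        if Matrix.vecMul x (polarG4 n) = u then pXN x else 0) = pXN u) ∧
    (∀ i : Fin n → Fin 2,
      condEnt (fun (a : ZMod 4) (v : {j : Fin n → Fin 2 // ord j < ord i} → ZMod 4) =>
        ∑ x : (Fin n → Fin 2) → ZMod 4,
          if Matrix.vecMul x (polarG4 n) i = a ∧
              (∀ j : {j : Fin n → Fin 2 // ord j < ord i},
                Matrix.vecMul x (polarG4 n) j.1 = v j)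
          then pXN x else 0) = 1) :=
  stmt16_general n
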